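/- In any zero-error SPIR scheme, for all distinct message indices k ≠ k' in {1,…,K} and every database index n ∈ {1,…,N}, H(A_n^{[k']} | Q_n^{[k']}) = H(A_n^{[k]} | W_k, Q_n^{[k]}); that is, database-privacy together with user-privacy forces the conditional entropy of any answer given its query to equal the conditional entropy of the answer given both the query and the desired message. -/
import Mathlib


open Finset

attribute [local instance] Classical.propDecidable

/-- Probability that the random variable `X` takes the value `a`, on a finite
sample space `Ω` with probability mass function `p`. -/
noncomputable def prob {Ω α : Type*} [Fintype Ω] (p : Ω → ℝ) (X : Ω → α) (a : α) : ℝ :=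
  ∑ ω : Ω, if X ω = a then p ω else 0

/-- Shannon entropy (in bits) of the random variable `X`. -/
noncomputable def ent {Ω α : Type*} [Fintype Ω] [Fintype α] (p : Ω → ℝ) (X : Ω → α) : ℝ :=
  - ∑ a : α, prob p X a * Real.logb 2 (prob p X a)

/-- Conditional Shannon entropy (in bits) `H(X | Y)`. -/
noncomputable def condEnt {Ω α β : Type*} [Fintype Ω] [Fintype α] [Fintype β]
    (p : Ω → ℝ) (X : Ω → α) (Y : Ω → β) : ℝ :=
  ent p (fun ω => (X ω, Y ω)) - ent p Y

/-- Shannon mutual information (in bits) `I(X ; Y)`. -/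
noncomputable def mutInfo {Ω α β : Type*} [Fintype Ω] [Fintype α] [Fintype β]
    (p : Ω → ℝ) (X : Ω → α) (Y : Ω → β) : ℝ :=
  ent p X + ent p Y - ent p (fun ω => (X ω, Y ω))

/-- `X` and `Y` are identically distributed. -/
def IdentDist {Ω α : Type*} [Fintype Ω] (p : Ω → ℝ) (X Y : Ω → α) : Prop :=
  ∀ a : α, prob p X a = prob p Y a

/-- `X` is uniformly distributed on `α`. -/
def Unif {Ω α : Type*} [Fintype Ω] [Fintype α] (p : Ω → ℝ) (X : Ω → α) : Prop :=
  ∀ a : α, prob p X a = 1 / (Fintype.card α : ℝ)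

section Aux

variable {Ω : Type*} [Fintype Ω]

lemma prob_nonneg {α : Type*} (p : Ω → ℝ) (hp0 : ∀ ω, 0 ≤ p ω) (X : Ω → α) (a : α) :
    0 ≤ prob p X a := by
  refine Finset.sum_nonneg fun ω _ => ?_
  split_ifs
  · exact hp0 ω
  · exact le_refl 0

lemma prob_total {α : Type*} [Fintype α] (p : Ω → ℝ) (hp1 : ∑ ω : Ω, p ω = 1) (X : Ω → α) :
    ∑ a : α, prob p X a = 1 := by
  unfold prob
  rw [Finset.sum_comm, ← hp1]
  refine Finset.sum_congr rfl fun ω _ => ?_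
  simp

lemma prob_comp {α β : Type*} [Fintype α] (p : Ω → ℝ) (X : Ω → α) (f : α → β) (b : β) :
    prob p (fun ω => f (X ω)) b = ∑ a : α, if f a = b then prob p X a else 0 := by
  unfold prob
  have h0 : ∀ a : α, (if f a = b then ∑ ω : Ω, (if X ω = a then p ω else 0) else 0)
      = ∑ ω : Ω, (if f a = b then (if X ω = a then p ω else 0) else 0) := by
    intro a
    split_ifs
    · rfl
    · simp
  rw [Finset.sum_congr rfl fun a _ => h0 a, Finset.sum_comm]
  refine Finset.sum_congr rfl fun ω _ => ?_
  have h : ∀ a : α, (if f a = b then (if X ω = a then p ω else 0) else 0)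
      = if a = X ω then (if f (X ω) = b then p ω else 0) else 0 := by
    intro a
    by_cases h : a = X ω
    · simp [h]
    · have hne : X ω ≠ a := fun he => h he.symm
      simp [h, hne]
  rw [Finset.sum_congr rfl fun a _ => h a]
  simp

lemma identDist_comp {α β : Type*} [Fintype α] (p : Ω → ℝ) {X Y : Ω → α}
    (h : IdentDist p X Y) (f : α → β) :
    IdentDist p (fun ω => f (X ω)) (fun ω => f (Y ω)) := by
  intro b
  rw [prob_comp, prob_comp]
  exact Finset.sum_congr rfl fun a _ => by rw [h a]

lemma ent_congr {α : Type*} [Fintype α] (p : Ω → ℝ) {X Y : Ω → α}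
    (h : IdentDist p X Y) : ent p X = ent p Y := by
  unfold ent
  congr 1
  exact Finset.sum_congr rfl fun a _ => by rw [h a]

lemma sum_push {τ σ : Type*} [Fintype τ] [Fintype σ] (q : τ → ℝ) (π : τ → σ) (c : σ → ℝ) :
    ∑ s : σ, (∑ t : τ, if π t = s then q t else 0) * c s = ∑ t : τ, q t * c (π t) := by
  have h0 : ∀ s : σ, (∑ t : τ, if π t = s then q t else 0) * c s
      = ∑ t : τ, (if π t = s then q t * c (π t) else 0) := by
    intro s
    rw [Finset.sum_mul]
    refine Finset.sum_congr rfl fun t _ => ?_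
    by_cases h : π t = s
    · simp [h]
    · simp [h]
  rw [Finset.sum_congr rfl fun s _ => h0 s, Finset.sum_comm]
  refine Finset.sum_congr rfl fun t _ => ?_
  simp

lemma entPush {τ σ : Type*} [Fintype τ] [Fintype σ] (p : Ω → ℝ) (T : Ω → τ) (π : τ → σ) :
    ent p (fun ω => π (T ω))
      = -∑ t : τ, prob p T t * Real.logb 2 (prob p (fun ω => π (T ω)) (π t)) := by
  unfold ent
  rw [← sum_push (prob p T) π (fun s => Real.logb 2 (prob p (fun ω => π (T ω)) s))]
  congr 1
  refine Finset.sum_congr rfl fun s _ => ?_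
  rw [← prob_comp]

lemma prob_comp_inj {α β : Type*} [Fintype α] (p : Ω → ℝ) (X : Ω → α) (ι : α → β)
    (hι : Function.Injective ι) (t : α) :
    prob p (fun ω => ι (X ω)) (ι t) = prob p X t := by
  rw [prob_comp]
  have h : ∀ a : α, (if ι a = ι t then prob p X a else 0) = if a = t then prob p X a else 0 := by
    intro a
    by_cases h : a = t
    · simp [h]
    · have hne : ι a ≠ ι t := fun he => h (hι he)
      simp [h, hne]
  rw [Finset.sum_congr rfl fun a _ => h a]
  simp

lemma ent_comp_inj {α β : Type*} [Fintype α] [Fintype β] (p : Ω → ℝ)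
    (X : Ω → α) (Y : Ω → β) (ι : α → β) (hι : Function.Injective ι)
    (hXY : ∀ ω, Y ω = ι (X ω)) : ent p Y = ent p X := by
  have hY : Y = fun ω => ι (X ω) := funext hXY
  subst hY
  rw [entPush p X ι]
  unfold ent
  congr 1
  refine Finset.sum_congr rfl fun t _ => ?_
  rw [prob_comp_inj p X ι hι t]

end Aux

section Gibbs

lemma gibbs {τ : Type*} [Fintype τ] (q b : τ → ℝ)
    (hq0 : ∀ t, 0 ≤ q t) (hq1 : ∑ t : τ, q t = 1)
    (hb : ∀ t, q t ≠ 0 → 0 < b t)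
    (hbsum : ∑ t ∈ Finset.univ.filter (fun t => q t ≠ 0), b t ≤ 1) :
    ∑ t : τ, q t * Real.logb 2 (b t) ≤ ∑ t : τ, q t * Real.logb 2 (q t) := by
  classical
  set s : Finset τ := Finset.univ.filter (fun t => q t ≠ 0) with hs
  have hssum : ∑ t ∈ s, q t = 1 := by
    rw [hs, Finset.sum_filter_ne_zero, hq1]
  have hlog2 : (0:ℝ) < Real.log 2 := Real.log_pos (by norm_num)
  have hL : ∑ t : τ, q t * Real.logb 2 (b t) = ∑ t ∈ s, q t * Real.logb 2 (b t) := by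
    rw [hs]
    rw [Finset.sum_filter_of_ne]
    intro t _ h hq
    exact h (by rw [hq]; ring)
  have hR : ∑ t : τ, q t * Real.logb 2 (q t) = ∑ t ∈ s, q t * Real.logb 2 (q t) := by
    rw [hs]
    rw [Finset.sum_filter_of_ne]
    intro t _ h hq
    exact h (by rw [hq]; ring)
  rw [hL, hR, ← sub_nonpos, ← Finset.sum_sub_distrib]
  have key : ∀ t ∈ s, q t * Real.logb 2 (b t) - q t * Real.logb 2 (q t) ≤ (b t - q t) / Real.log 2 := by
    intro t ht
    have hqt0 : q t ≠ 0 := (Finset.mem_filter.mp ht).2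
    have hqt : 0 < q t := lt_of_le_of_ne (hq0 t) (Ne.symm hqt0)
    have hbt : 0 < b t := hb t hqt0
    have hlog : Real.log (b t / q t) ≤ b t / q t - 1 :=
      Real.log_le_sub_one_of_pos (by positivity)
    have h1 : q t * Real.logb 2 (b t) - q t * Real.logb 2 (q t)
        = q t * Real.log (b t / q t) / Real.log 2 := by
      rw [Real.log_div hbt.ne' hqt.ne']
      unfold Real.logb
      field_simp
    rw [h1]
    rw [div_le_div_iff_of_pos_right hlog2]
    calc q t * Real.log (b t / q t) ≤ q t * (b t / q t - 1) := by
          exact mul_le_mul_of_nonneg_left hlog hqt.le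
      _ = b t - q t := by field_simp
  calc ∑ t ∈ s, (q t * Real.logb 2 (b t) - q t * Real.logb 2 (q t))
      ≤ ∑ t ∈ s, (b t - q t) / Real.log 2 := Finset.sum_le_sum key
    _ = ((∑ t ∈ s, b t) - 1) / Real.log 2 := by
        rw [← Finset.sum_div, Finset.sum_sub_distrib, hssum]
    _ ≤ 0 := by
        apply div_nonpos_of_nonpos_of_nonneg
        · linarith
        · exact hlog2.le

end Gibbs

section Submod

variable {Ω : Type*} [Fintype Ω]

lemma prob_le_comp {τ σ : Type*} [Fintype τ] (p : Ω → ℝ) (hp0 : ∀ ω, 0 ≤ p ω)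
    (T : Ω → τ) (π : τ → σ) (t : τ) :
    prob p T t ≤ prob p (fun ω => π (T ω)) (π t) := by
  rw [prob_comp p T π (π t)]
  have h := Finset.single_le_sum (f := fun a => if π a = π t then prob p T a else 0)
    (fun a _ => by
      split_ifs
      · exact prob_nonneg p hp0 T a
      · exact le_refl 0) (Finset.mem_univ t)
  simpa using h

lemma marg_left {α γ : Type*} [Fintype α] (p : Ω → ℝ) (X : Ω → α) (Qv : Ω → γ) (c : γ) :
    ∑ x : α, prob p (fun ω => (X ω, Qv ω)) (x, c) = prob p Qv c := by
  unfold prob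
  rw [Finset.sum_comm]
  refine Finset.sum_congr rfl fun ω _ => ?_
  beta_reduce
  by_cases hc : Qv ω = c
  · simp [Prod.ext_iff, hc]
  · simp [Prod.ext_iff, hc]

/-- The `b`-mass used in the proof of submodularity sums to at most one on the
support of `q`. -/
lemma bsum_le {α β γ : Type*} [Fintype α] [Fintype β] [Fintype γ]
    (q : α × β × γ → ℝ) (m13 : α × γ → ℝ) (m23 : β × γ → ℝ) (m3 : γ → ℝ)
    (hm13nn : ∀ y, 0 ≤ m13 y) (hm23nn : ∀ y, 0 ≤ m23 y) (hm3nn : ∀ c, 0 ≤ m3 c)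
    (hq0 : ∀ t, 0 ≤ q t)
    (hle3 : ∀ t, q t ≤ m3 t.2.2)
    (hM13 : ∀ c, ∑ x : α, m13 (x, c) = m3 c)
    (hM23 : ∀ c, ∑ a : β, m23 (a, c) = m3 c)
    (hm3sum : ∑ c : γ, m3 c = 1) :
    ∑ t ∈ Finset.univ.filter (fun t => q t ≠ 0),
      m13 (t.1, t.2.2) * m23 t.2 / m3 t.2.2 ≤ 1 := by
  classical
  have hbnn : ∀ t : α × β × γ, 0 ≤ m13 (t.1, t.2.2) * m23 t.2 / m3 t.2.2 := fun t =>
    div_nonneg (mul_nonneg (hm13nn _) (hm23nn _)) (hm3nn _)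
  have hsub : Finset.univ.filter (fun t : α × β × γ => q t ≠ 0)
      ⊆ Finset.univ.filter (fun t : α × β × γ => m3 t.2.2 ≠ 0) := by
    intro t ht
    simp only [Finset.mem_filter, Finset.mem_univ, true_and] at ht ⊢
    exact fun hc => ht (le_antisymm (hc ▸ hle3 t) (hq0 t))
  have step1 : ∑ t ∈ Finset.univ.filter (fun t => q t ≠ 0),
        m13 (t.1, t.2.2) * m23 t.2 / m3 t.2.2
      ≤ ∑ t ∈ Finset.univ.filter (fun t : α × β × γ => m3 t.2.2 ≠ 0),
        m13 (t.1, t.2.2) * m23 t.2 / m3 t.2.2 :=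
    Finset.sum_le_sum_of_subset_of_nonneg hsub (fun t _ _ => hbnn t)
  have hxa : ∀ c : γ, (∑ x : α, ∑ a : β,
      (if m3 c ≠ 0 then m13 (x, c) * m23 (a, c) / m3 c else 0))
      = if m3 c ≠ 0 then m3 c else 0 := by
    intro c
    by_cases hc : m3 c = 0
    · simp [hc]
    · simp only [hc, ne_eq, not_false_eq_true, if_true]
      have hinner : ∀ x : α, ∑ a : β, m13 (x, c) * m23 (a, c) / m3 c
          = m13 (x, c) := by
        intro x
        calc ∑ a : β, m13 (x, c) * m23 (a, c) / m3 c
            = ∑ a : β, (m13 (x, c) / m3 c) * m23 (a, c) := by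
              refine Finset.sum_congr rfl fun a _ => by ring
          _ = (m13 (x, c) / m3 c) * ∑ a : β, m23 (a, c) := by rw [Finset.mul_sum]
          _ = (m13 (x, c) / m3 c) * m3 c := by rw [hM23 c]
          _ = m13 (x, c) := by field_simp
      rw [Finset.sum_congr rfl fun x _ => hinner x]
      exact hM13 c
  have step2 : ∑ t ∈ Finset.univ.filter (fun t : α × β × γ => m3 t.2.2 ≠ 0),
      m13 (t.1, t.2.2) * m23 t.2 / m3 t.2.2
      = ∑ c : γ, (if m3 c ≠ 0 then m3 c else 0) := by
    rw [Finset.sum_filter]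
    rw [Fintype.sum_prod_type]
    have h1 : ∀ x : α, ∑ y : β × γ,
        (if m3 y.2 ≠ 0 then m13 (x, y.2) * m23 y / m3 y.2 else 0)
        = ∑ c : γ, ∑ a : β, (if m3 c ≠ 0 then m13 (x, c) * m23 (a, c) / m3 c else 0) := by
      intro x
      rw [Fintype.sum_prod_type]
      rw [Finset.sum_comm]
    rw [Finset.sum_congr rfl fun x _ => h1 x]
    rw [Finset.sum_comm]
    exact Finset.sum_congr rfl fun c _ => hxa c
  have step3 : ∑ c : γ, (if m3 c ≠ 0 then m3 c else 0) ≤ 1 := by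
    rw [← hm3sum]
    refine Finset.sum_le_sum fun c _ => ?_
    split_ifs
    · exact le_refl _
    · exact hm3nn c
  calc ∑ t ∈ Finset.univ.filter (fun t => q t ≠ 0),
        m13 (t.1, t.2.2) * m23 t.2 / m3 t.2.2
      ≤ ∑ t ∈ Finset.univ.filter (fun t : α × β × γ => m3 t.2.2 ≠ 0),
        m13 (t.1, t.2.2) * m23 t.2 / m3 t.2.2 := step1
    _ = ∑ c : γ, (if m3 c ≠ 0 then m3 c else 0) := step2
    _ ≤ 1 := step3

lemma ent_submod {α β γ : Type*} [Fintype α] [Fintype β] [Fintype γ]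
    (p : Ω → ℝ) (hp0 : ∀ ω, 0 ≤ p ω) (hp1 : ∑ ω : Ω, p ω = 1)
    (X : Ω → α) (A : Ω → β) (Qv : Ω → γ) :
    ent p Qv + ent p (fun ω => (X ω, A ω, Qv ω)) ≤
      ent p (fun ω => (X ω, Qv ω)) + ent p (fun ω => (A ω, Qv ω)) := by
  classical
  set q : α × β × γ → ℝ := prob p (fun ω => (X ω, A ω, Qv ω)) with hqdef
  set m13 : α × γ → ℝ := prob p (fun ω => (X ω, Qv ω)) with hm13def
  set m23 : β × γ → ℝ := prob p (fun ω => (A ω, Qv ω)) with hm23def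
  set m3 : γ → ℝ := prob p Qv with hm3def
  have e0 : ent p (fun ω => (X ω, A ω, Qv ω))
      = -∑ t : α × β × γ, q t * Real.logb 2 (q t) := rfl
  have e3 : ent p Qv = -∑ t : α × β × γ, q t * Real.logb 2 (m3 t.2.2) :=
    entPush p (fun ω => (X ω, A ω, Qv ω)) (fun t => t.2.2)
  have e13 : ent p (fun ω => (X ω, Qv ω))
      = -∑ t : α × β × γ, q t * Real.logb 2 (m13 (t.1, t.2.2)) :=
    entPush p (fun ω => (X ω, A ω, Qv ω)) (fun t => (t.1, t.2.2))
  have e23 : ent p (fun ω => (A ω, Qv ω))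
      = -∑ t : α × β × γ, q t * Real.logb 2 (m23 t.2) :=
    entPush p (fun ω => (X ω, A ω, Qv ω)) (fun t => t.2)
  have hq0 : ∀ t, 0 ≤ q t := fun t => prob_nonneg p hp0 _ t
  have hq1 : ∑ t : α × β × γ, q t = 1 := prob_total p hp1 _
  have hm13nn : ∀ y, 0 ≤ m13 y := fun y => prob_nonneg p hp0 _ y
  have hm23nn : ∀ y, 0 ≤ m23 y := fun y => prob_nonneg p hp0 _ y
  have hm3nn : ∀ c, 0 ≤ m3 c := fun c => prob_nonneg p hp0 _ c
  have hle13 : ∀ t : α × β × γ, q t ≤ m13 (t.1, t.2.2) := fun t =>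
    prob_le_comp p hp0 (fun ω => (X ω, A ω, Qv ω)) (fun t => (t.1, t.2.2)) t
  have hle23 : ∀ t : α × β × γ, q t ≤ m23 t.2 := fun t =>
    prob_le_comp p hp0 (fun ω => (X ω, A ω, Qv ω)) (fun t => t.2) t
  have hle3 : ∀ t : α × β × γ, q t ≤ m3 t.2.2 := fun t =>
    prob_le_comp p hp0 (fun ω => (X ω, A ω, Qv ω)) (fun t => t.2.2) t
  have hM13 : ∀ c, ∑ x : α, m13 (x, c) = m3 c := fun c => marg_left p X Qv c
  have hM23 : ∀ c, ∑ a : β, m23 (a, c) = m3 c := fun c => marg_left p A Qv c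
  have hm3sum : ∑ c : γ, m3 c = 1 := prob_total p hp1 _
  have hbpos : ∀ t : α × β × γ, q t ≠ 0 → 0 < m13 (t.1, t.2.2) * m23 t.2 / m3 t.2.2 := by
    intro t ht
    have hq : 0 < q t := lt_of_le_of_ne (hq0 t) (Ne.symm ht)
    exact div_pos (mul_pos (lt_of_lt_of_le hq (hle13 t)) (lt_of_lt_of_le hq (hle23 t)))
      (lt_of_lt_of_le hq (hle3 t))
  have hbsum := bsum_le q m13 m23 m3 hm13nn hm23nn hm3nn hq0 hle3 hM13 hM23 hm3sum
  have hgibbs := gibbs q (fun t => m13 (t.1, t.2.2) * m23 t.2 / m3 t.2.2)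
    hq0 hq1 hbpos hbsum
  have hsplit : ∀ t : α × β × γ,
      q t * Real.logb 2 (m13 (t.1, t.2.2) * m23 t.2 / m3 t.2.2)
      = q t * Real.logb 2 (m13 (t.1, t.2.2)) + q t * Real.logb 2 (m23 t.2)
        - q t * Real.logb 2 (m3 t.2.2) := by
    intro t
    by_cases ht : q t = 0
    · simp [ht]
    · have hq : 0 < q t := lt_of_le_of_ne (hq0 t) (Ne.symm ht)
      have h1 : 0 < m13 (t.1, t.2.2) := lt_of_lt_of_le hq (hle13 t)
      have h2 : 0 < m23 t.2 := lt_of_lt_of_le hq (hle23 t)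
      have h3 : 0 < m3 t.2.2 := lt_of_lt_of_le hq (hle3 t)
      rw [Real.logb_div (by positivity) h3.ne', Real.logb_mul h1.ne' h2.ne']
      ring
  have hsplitsum : ∑ t : α × β × γ,
      q t * Real.logb 2 (m13 (t.1, t.2.2) * m23 t.2 / m3 t.2.2)
      = (∑ t : α × β × γ, q t * Real.logb 2 (m13 (t.1, t.2.2)))
        + (∑ t : α × β × γ, q t * Real.logb 2 (m23 t.2))
        - (∑ t : α × β × γ, q t * Real.logb 2 (m3 t.2.2)) := by
    rw [Finset.sum_congr rfl fun t _ => hsplit t]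
    rw [Finset.sum_sub_distrib, Finset.sum_add_distrib]
  rw [e0, e3, e13, e23]
  rw [hsplitsum] at hgibbs
  linarith

end Submod

section Pair

variable {Ω : Type*} [Fintype Ω]

lemma ent_unit (p : Ω → ℝ) (hp1 : ∑ ω : Ω, p ω = 1) : ent p (fun _ : Ω => ()) = 0 := by
  unfold ent prob
  simp [hp1]

lemma ent_pair_le {α β : Type*} [Fintype α] [Fintype β]
    (p : Ω → ℝ) (hp0 : ∀ ω, 0 ≤ p ω) (hp1 : ∑ ω : Ω, p ω = 1) (X : Ω → α) (Y : Ω → β) :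
    ent p (fun ω => (X ω, Y ω)) ≤ ent p X + ent p Y := by
  have h : ent p (fun _ : Ω => ()) + ent p (fun ω => (X ω, Y ω, ()))
      ≤ ent p (fun ω => (X ω, ())) + ent p (fun ω => (Y ω, ())) :=
    ent_submod p hp0 hp1 X Y (fun _ => ())
  have r0 : ent p (fun _ : Ω => ()) = 0 := ent_unit p hp1
  have r1 : ent p (fun ω => (X ω, ())) = ent p X :=
    ent_comp_inj p X _ (fun x => (x, ()))
      (Function.LeftInverse.injective (g := Prod.fst) fun a => rfl) (fun ω => rfl)
  have r2 : ent p (fun ω => (Y ω, ())) = ent p Y :=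
    ent_comp_inj p Y _ (fun y => (y, ()))
      (Function.LeftInverse.injective (g := Prod.fst) fun a => rfl) (fun ω => rfl)
  have r3 : ent p (fun ω => (X ω, Y ω, ())) = ent p (fun ω => (X ω, Y ω)) :=
    ent_comp_inj p (fun ω => (X ω, Y ω)) _ (fun t => (t.1, t.2, ()))
      (Function.LeftInverse.injective (g := fun s => (s.1, s.2.1)) fun a => rfl)
      (fun ω => rfl)
  linarith

end Pair

/-- In any zero-error SPIR scheme, for all distinct `k ≠ k'` and every
database index `n`, `H(A_n^[k'] | Q_n^[k']) = H(A_n^[k] | W_k, Q_n^[k])`. -/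
theorem spir_answer_entropy_given_query_eq
    (K N L : ℕ) (hK : 2 ≤ K) (hN : 2 ≤ N) (hL : 1 ≤ L)
    (Ω : Type*) [Fintype Ω]
    (p : Ω → ℝ) (hp0 : ∀ ω, 0 ≤ p ω) (hp1 : ∑ ω : Ω, p ω = 1)
    (𝓢 𝓕 : Type*) [Fintype 𝓢] [Fintype 𝓕]
    (𝓠 𝓐 : Fin N → Type*) [∀ n, Fintype (𝓠 n)] [∀ n, Fintype (𝓐 n)]
    (W : Fin K → Ω → (Fin L → ZMod 2)) (S : Ω → 𝓢) (F : Ω → 𝓕)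
    (Q : ∀ (_ : Fin K) (n : Fin N), Ω → 𝓠 n) (A : ∀ (_ : Fin K) (n : Fin N), Ω → 𝓐 n)
    -- each message is uniformly distributed on the set of `L`-bit strings
    (hWunif : ∀ k, Unif p (W k))
    -- the messages, the common randomness `S` and the user randomness `F`
    -- are mutually independent
    (hIndep : ∀ (w : ∀ _ : Fin K, Fin L → ZMod 2) (s : 𝓢) (f : 𝓕),
      prob p (fun ω => ((fun k => W k ω), S ω, F ω)) (w, s, f)
        = (∏ k, prob p (W k) (w k)) * prob p S s * prob p F f)
    -- each query is a deterministic function of `F`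
    (hQ : ∀ k n, ∃ g : 𝓕 → 𝓠 n, ∀ ω, Q k n ω = g (F ω))
    -- each answer is a deterministic function of the query, the messages and `S`
    (hA : ∀ k n, ∃ g : 𝓠 n → (∀ _ : Fin K, Fin L → ZMod 2) → 𝓢 → 𝓐 n,
      ∀ ω, A k n ω = g (Q k n ω) (fun j => W j ω) (S ω))
    -- correctness: `W_k` is decodable from the answers and `F`
    (hCorrect : ∀ k, ∃ g : (∀ n, 𝓐 n) → 𝓕 → (Fin L → ZMod 2),
      ∀ ω, W k ω = g (fun n => A k n ω) (F ω))
    -- user-privacy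
    (hUserPriv : ∀ (n : Fin N) (k k' : Fin K),
      IdentDist p (fun ω => (Q k n ω, A k n ω, (fun j => W j ω), S ω))
                  (fun ω => (Q k' n ω, A k' n ω, (fun j => W j ω), S ω)))
    -- database-privacy
    (hDBPriv : ∀ k : Fin K,
      mutInfo p (fun ω => (fun j : {j : Fin K // j ≠ k} => W j.1 ω))
        (fun ω => ((fun n => Q k n ω), (fun n => A k n ω), F ω)) = 0) :
    ∀ (k k' : Fin K), k ≠ k' → ∀ n : Fin N,
      condEnt p (A k' n) (Q k' n) = condEnt p (A k n) (fun ω => (W k ω, Q k n ω)) := by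
  intro k k' hkk' n
  classical
  set U : Ω → ({j : Fin K // j ≠ k'} → (Fin L → ZMod 2)) :=
    fun ω => fun j : {j : Fin K // j ≠ k'} => W j.1 ω with hUdef
  set Z : Ω → ((∀ m : Fin N, 𝓠 m) × (∀ m : Fin N, 𝓐 m) × 𝓕) :=
    fun ω => ((fun m => Q k' m ω), (fun m => A k' m ω), F ω) with hZdef
  -- database privacy at user k'
  have hDB : ent p U + ent p Z - ent p (fun ω => (U ω, Z ω)) = 0 := hDBPriv k'
  -- relabelings
  have r1 : ent p (fun ω => (W k ω, U ω)) = ent p U :=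
    ent_comp_inj p U _ (fun u => (u ⟨k, hkk'⟩, u))
      (Function.LeftInverse.injective (g := Prod.snd) fun a => rfl) (fun ω => rfl)
  have r2 : ent p (fun ω => (W k ω, U ω, Z ω)) = ent p (fun ω => (U ω, Z ω)) :=
    ent_comp_inj p (fun ω => (U ω, Z ω)) _ (fun t => (t.1 ⟨k, hkk'⟩, t.1, t.2))
      (Function.LeftInverse.injective (g := Prod.snd) fun a => rfl) (fun ω => rfl)
  have r3 : ent p (fun ω => (U ω, Z ω, W k ω)) = ent p (fun ω => (W k ω, U ω, Z ω)) :=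
    ent_comp_inj p (fun ω => (W k ω, U ω, Z ω)) _ (fun t => (t.2.1, t.2.2, t.1))
      (Function.LeftInverse.injective (g := fun s => (s.2.2, s.1, s.2.1)) fun a => rfl)
      (fun ω => rfl)
  have r4 : ent p (fun ω => (U ω, W k ω)) = ent p (fun ω => (W k ω, U ω)) :=
    ent_comp_inj p (fun ω => (W k ω, U ω)) _ (fun t => (t.2, t.1))
      (Function.LeftInverse.injective (g := fun s => (s.2, s.1)) fun a => rfl)
      (fun ω => rfl)
  have r5 : ent p (fun ω => (Z ω, W k ω)) = ent p (fun ω => (W k ω, Z ω)) :=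
    ent_comp_inj p (fun ω => (W k ω, Z ω)) _ (fun t => (t.2, t.1))
      (Function.LeftInverse.injective (g := fun s => (s.2, s.1)) fun a => rfl)
      (fun ω => rfl)
  have r6 : ent p (fun ω => (Z ω, (A k' n ω, Q k' n ω))) = ent p Z :=
    ent_comp_inj p Z _ (fun z => (z, (z.2.1 n, z.1 n)))
      (Function.LeftInverse.injective (g := Prod.fst) fun a => rfl) (fun ω => rfl)
  have r7 : ent p (fun ω => (W k ω, Z ω, (A k' n ω, Q k' n ω)))
      = ent p (fun ω => (W k ω, Z ω)) :=
    ent_comp_inj p (fun ω => (W k ω, Z ω)) _ (fun t => (t.1, t.2, (t.2.2.1 n, t.2.1 n)))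
      (Function.LeftInverse.injective (g := fun s => (s.1, s.2.1)) fun a => rfl)
      (fun ω => rfl)
  have r8 : ent p (fun ω => (A k' n ω, (W k ω, Q k' n ω)))
      = ent p (fun ω => (W k ω, (A k' n ω, Q k' n ω))) :=
    ent_comp_inj p (fun ω => (W k ω, (A k' n ω, Q k' n ω))) _
      (fun t => (t.2.1, (t.1, t.2.2)))
      (Function.LeftInverse.injective (g := fun s => (s.2.1, (s.1, s.2.2))) fun a => rfl)
      (fun ω => rfl)
  -- data processing inequalities
  have hdp2 : ent p (W k) + ent p (fun ω => (U ω, Z ω, W k ω))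
      ≤ ent p (fun ω => (U ω, W k ω)) + ent p (fun ω => (Z ω, W k ω)) :=
    ent_submod p hp0 hp1 U Z (W k)
  have hdp3 : ent p (fun ω => (A k' n ω, Q k' n ω))
      + ent p (fun ω => (W k ω, Z ω, (A k' n ω, Q k' n ω)))
      ≤ ent p (fun ω => (W k ω, (A k' n ω, Q k' n ω)))
        + ent p (fun ω => (Z ω, (A k' n ω, Q k' n ω))) :=
    ent_submod p hp0 hp1 (W k) Z (fun ω => (A k' n ω, Q k' n ω))
  -- nonnegativity pieces
  have hi1 : ent p (fun ω => (W k ω, Q k' n ω)) ≤ ent p (W k) + ent p (Q k' n) :=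
    ent_pair_le p hp0 hp1 (W k) (Q k' n)
  have hi2 : ent p (Q k' n) + ent p (fun ω => (W k ω, (A k' n ω, Q k' n ω)))
      ≤ ent p (fun ω => (W k ω, Q k' n ω)) + ent p (fun ω => (A k' n ω, Q k' n ω)) :=
    ent_submod p hp0 hp1 (W k) (A k' n) (Q k' n)
  -- user privacy transfer
  have hup := hUserPriv n k k'
  have hA1 : ent p (fun ω => (A k n ω, (W k ω, Q k n ω)))
      = ent p (fun ω => (A k' n ω, (W k ω, Q k' n ω))) :=
    ent_congr p (identDist_comp p hup (fun t => (t.2.1, (t.2.2.1 k, t.1))))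
  have hA2 : ent p (fun ω => (W k ω, Q k n ω)) = ent p (fun ω => (W k ω, Q k' n ω)) :=
    ent_congr p (identDist_comp p hup (fun t => (t.2.2.1 k, t.1)))
  show ent p (fun ω => (A k' n ω, Q k' n ω)) - ent p (Q k' n)
      = ent p (fun ω => (A k n ω, (W k ω, Q k n ω))) - ent p (fun ω => (W k ω, Q k n ω))
  rw [hA1, hA2, r8]
  linarith
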